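/- Let α₆ := (2/3)·(2 + (18√11 − 43)^{1/3}/5^{2/3} − 7/(5^{1/3}·(18√11 − 43)^{1/3})). Then 4/5 < α₆ < 2/√5, and for every real α with 4/5 < α < 2/√5 one has 4 − 16/(5α) ≤ (4 − 5α²)/(6 − 5α) if and only if α ≤ α₆; in particular 4 − 16/(5α₆) = (4 − 5α₆²)/(6 − 5α₆). (This is the statement that α_*(6) = α₆ for m(α,6) = min{(4−5α²)/(6−5α), 4 − 16/(5α)}.) -/

import Mathlib

/-!
Clearing denominators, `4 − 16/(5α) ≤ (4 − 5α²)/(6 − 5α)` becomes `f(α) ≤ 0` for the cubic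
`f(α) = 25α³ − 100α² + 180α − 96`. Its derivative `75α² − 200α + 180` has negative discriminant,
so `f` is strictly increasing and the comparison holds exactly up to its unique real root.
Cardano's formula shows that this root is `α₆`, and the signs of `f(4/5) = −16/5` and
`f(2/√5) = 80√5 − 176` locate it inside `(4/5, 2/√5)`.
-/

noncomputable def alphaStar6 : ℝ :=
  (2 / 3) * (2 + (18 * Real.sqrt 11 - 43) ^ ((1 : ℝ) / 3) / (5 : ℝ) ^ ((2 : ℝ) / 3)
    - 7 / ((5 : ℝ) ^ ((1 : ℝ) / 3) * (18 * Real.sqrt 11 - 43) ^ ((1 : ℝ) / 3)))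

open Real

def cubic6 (x : ℝ) : ℝ := 25 * x ^ 3 - 100 * x ^ 2 + 180 * x - 96

lemma strictMono_cubic6 : StrictMono cubic6 := by
  intro x y hxy
  -- `f y − f x = (y − x)(25(s² + st + t²) + 140/3)` with `s = x − 4/3`, `t = y − 4/3`.
  have hpos : 0 < 25 * ((x - 4/3) ^ 2 + (x - 4/3) * (y - 4/3) + (y - 4/3) ^ 2) + 140 / 3 := by
    nlinarith [sq_nonneg (x - 4/3 + (y - 4/3)), sq_nonneg (x - 4/3), sq_nonneg (y - 4/3)]
  have := mul_pos (sub_pos.mpr hxy) hpos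
  simp only [cubic6]
  nlinarith

lemma cubic6_cardano {v : ℝ} (hv : v ≠ 0) (hv3 : 25 * v ^ 3 = 18 * √11 - 43) :
    cubic6 ((2 / 3) * (2 + v - 7 / (5 * v))) = 0 := by
  have h11 : √11 ^ 2 = 11 := sq_sqrt (by norm_num)
  simp only [cubic6]
  field_simp
  linear_combination (8 * (125 * v ^ 3 + 5 * (18 * √11 - 43) + 430)) * hv3 + 12960 * h11

lemma alphaStar6_eq_cardano :
    alphaStar6 = (2 / 3) * (2 + (18 * √11 - 43) ^ ((1 : ℝ) / 3) / (5 : ℝ) ^ ((2 : ℝ) / 3)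
      - 7 / (5 * ((18 * √11 - 43) ^ ((1 : ℝ) / 3) / (5 : ℝ) ^ ((2 : ℝ) / 3)))) := by
  have hp : (5 : ℝ) ^ ((1 : ℝ) / 3) * 5 ^ ((2 : ℝ) / 3) = 5 := by
    rw [← rpow_add (by norm_num)]; norm_num
  have hq : (0 : ℝ) < 5 ^ ((2 : ℝ) / 3) := by positivity
  have h : 5 * ((18 * √11 - 43) ^ ((1 : ℝ) / 3) / (5 : ℝ) ^ ((2 : ℝ) / 3)) =
      (5 : ℝ) ^ ((1 : ℝ) / 3) * (18 * √11 - 43) ^ ((1 : ℝ) / 3) := by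
    rw [mul_div_assoc', div_eq_iff hq.ne', mul_right_comm, hp]
  rw [h, alphaStar6]

lemma cubic6_alphaStar6 : cubic6 alphaStar6 = 0 := by
  have h11 : (0 : ℝ) < 18 * √11 - 43 := by
    have := sq_sqrt (show (0 : ℝ) ≤ 11 by norm_num)
    nlinarith [sqrt_nonneg 11]
  rw [alphaStar6_eq_cardano]
  refine cubic6_cardano (by positivity) ?_
  have hc : ((18 * √11 - 43) ^ ((1 : ℝ) / 3)) ^ 3 = 18 * √11 - 43 := by
    rw [one_div]; exact_mod_cast rpow_inv_natCast_pow h11.le three_ne_zero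
  have hp : ((5 : ℝ) ^ ((2 : ℝ) / 3)) ^ 3 = 25 := by
    rw [← rpow_natCast, ← rpow_mul (by norm_num)]; norm_num
  rw [div_pow, hc, hp]
  field_simp

lemma cubic6_two_div_sqrt_five : cubic6 (2 / √5) = 80 * √5 - 176 := by
  have h5 : √5 ^ 2 = 5 := sq_sqrt (by norm_num)
  have h5' : √5 ≠ 0 := by positivity
  simp only [cubic6]
  field_simp
  linear_combination (-80 * √5 ^ 2 + 80 * √5 - 40) * h5

lemma sub_eq_neg_cubic6_div {α : ℝ} (h0 : α ≠ 0) (h6 : 6 - 5 * α ≠ 0) :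
    (4 - 5 * α ^ 2) / (6 - 5 * α) - (4 - 16 / (5 * α)) =
      -cubic6 α / (5 * α * (6 - 5 * α)) := by
  simp only [cubic6]
  field_simp
  ring

lemma sub_div_le_div_iff_cubic6_nonpos {α : ℝ} (h0 : 0 < α) (h6 : α < 6 / 5) :
    4 - 16 / (5 * α) ≤ (4 - 5 * α ^ 2) / (6 - 5 * α) ↔ cubic6 α ≤ 0 := by
  have hd : 0 < 5 * α * (6 - 5 * α) := by nlinarith
  rw [← sub_nonneg, sub_eq_neg_cubic6_div h0.ne' (by linarith), le_div_iff₀ hd, zero_mul,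
    neg_nonneg]

lemma two_div_sqrt_five_lt : 2 / √5 < 6 / 5 := by
  rw [div_lt_iff₀ (by positivity)]
  nlinarith [sq_sqrt (show (0 : ℝ) ≤ 5 by norm_num), sqrt_nonneg 5]

/-- `4/5 < α₆ < 2/√5`, and for every real `α` with `4/5 < α < 2/√5`
one has `4 − 16/(5α) ≤ (4 − 5α²)/(6 − 5α)` if and only if `α ≤ α₆`; in particular
`4 − 16/(5α₆) = (4 − 5α₆²)/(6 − 5α₆)`. This is the statement `α_*(6) = α₆`. -/
theorem statement6 :
    (4 / 5 < alphaStar6 ∧ alphaStar6 < 2 / Real.sqrt 5) ∧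
    (∀ α : ℝ, 4 / 5 < α → α < 2 / Real.sqrt 5 →
      (4 - 16 / (5 * α) ≤ (4 - 5 * α ^ 2) / (6 - 5 * α) ↔ α ≤ alphaStar6)) ∧
    4 - 16 / (5 * alphaStar6) = (4 - 5 * alphaStar6 ^ 2) / (6 - 5 * alphaStar6) := by
  have hroot := cubic6_alphaStar6
  have hlow : 4 / 5 < alphaStar6 :=
    strictMono_cubic6.lt_iff_lt.mp (by rw [hroot]; norm_num [cubic6])
  have hup : alphaStar6 < 2 / √5 := by
    refine strictMono_cubic6.lt_iff_lt.mp ?_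
    rw [hroot, cubic6_two_div_sqrt_five]
    nlinarith [sq_sqrt (show (0 : ℝ) ≤ 5 by norm_num), sqrt_nonneg 5]
  have hsmall : alphaStar6 < 6 / 5 := hup.trans two_div_sqrt_five_lt
  refine ⟨⟨hlow, hup⟩, fun α hα hα' => ?_, ?_⟩
  · rw [sub_div_le_div_iff_cubic6_nonpos (by linarith) (hα'.trans two_div_sqrt_five_lt), ← hroot,
      strictMono_cubic6.le_iff_le]
  · have hpos : 0 < alphaStar6 := by linarith
    have hpos' : 0 < 6 - 5 * alphaStar6 := by linarith
    rw [eq_comm, ← sub_eq_zero, sub_eq_neg_cubic6_div hpos.ne' hpos'.ne', hroot, neg_zero,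
      zero_div]
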